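/- Let 0 ≤ θ₁ < λ < θ₂ < π and γ₁, γ₂ > 0. For s > 0 define ρ(s) ∈ (0,1) by artanh(ρ(s)) = (1/2)·artanh( sin(θ₂−θ₁) / (coth(2γ₁s)·sin(θ₂−λ) + coth(2γ₂s)·sin(λ−θ₁)) ), and define r(s) ∈ (0,1) by artanh(r(s)) = s·artanh(ρ(1)). Then for all s ∈ (0,1], ρ(s) ≥ r(s). -/

import Mathlib

/-!
Write `A = sin (θ₂ - θ₁)`, `cᵢ` for `sin (θ₂ - λ)`, `sin (λ - θ₁)` and
`D s = c₁ coth (2γ₁ s) + c₂ coth (2γ₂ s)`. Then `0 ≤ A ≤ c₁ + c₂ < D s`, and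
`φ s = artanh (A / D s) = 2 artanh (ρ s)` is nonnegative and concave on `(0, ∞)`. Hence `φ s / s`
is nonincreasing, so `φ s ≥ s φ 1 = 2 artanh (r s)` for `s ≤ 1`. Concavity, `φ'' ≤ 0`, amounts to
`2 D D'² ≤ D'' (D² - A²)`, which in the variables `xᵢ = coth (2γᵢ s)` is a consequence of two
Cauchy–Schwarz inequalities.
-/

/-- The inverse hyperbolic tangent. -/
noncomputable def artanh (x : ℝ) : ℝ := Real.log ((1 + x) / (1 - x)) / 2

noncomputable def coth (x : ℝ) : ℝ := Real.cosh x / Real.sinh x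

open Set Filter Topology

lemma artanh_eq_real_artanh {x : ℝ} (hx : x ∈ Icc (-1) 1) : artanh x = Real.artanh x := by
  rw [Real.artanh_eq_half_log hx, artanh]
  ring

lemma artanh_le_artanh_iff {x y : ℝ} (hx : x ∈ Ioo (-1) 1) (hy : y ∈ Ioo (-1) 1) :
    artanh x ≤ artanh y ↔ x ≤ y := by
  rw [artanh_eq_real_artanh (Ioo_subset_Icc_self hx),
    artanh_eq_real_artanh (Ioo_subset_Icc_self hy), Real.artanh_le_artanh_iff hx hy]

lemma artanh_nonneg {x : ℝ} (hx₀ : 0 ≤ x) (hx₁ : x ≤ 1) : 0 ≤ artanh x := by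
  rw [artanh_eq_real_artanh ⟨by linarith, hx₁⟩]
  exact Real.artanh_nonneg hx₀

lemma hasDerivAt_artanh {x : ℝ} (hx : x ∈ Ioo (-1) 1) : HasDerivAt artanh (1 - x ^ 2)⁻¹ x := by
  obtain ⟨hx₀, hx₁⟩ := hx
  have hquot : HasDerivAt (fun y => (1 + y) / (1 - y))
      ((1 * (1 - x) - (1 + x) * -1) / (1 - x) ^ 2) x :=
    ((hasDerivAt_id x).const_add 1).div ((hasDerivAt_id x).const_sub 1) (by linarith)
  have hpos : 0 < (1 + x) / (1 - x) := div_pos (by linarith) (by linarith)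
  refine ((hquot.log hpos.ne').div_const 2).congr_deriv ?_
  have : 1 - x ≠ 0 := by linarith
  have : 1 + x ≠ 0 := by linarith
  have : 1 - x ^ 2 ≠ 0 := by nlinarith
  field_simp
  ring

lemma one_lt_coth {x : ℝ} (hx : 0 < x) : 1 < coth x :=
  (one_lt_div (Real.sinh_pos_iff.2 hx)).2 (Real.sinh_lt_cosh x)

lemma hasDerivAt_coth {x : ℝ} (hx : x ≠ 0) : HasDerivAt coth (1 - coth x ^ 2) x := by
  have hsinh : Real.sinh x ≠ 0 := Real.sinh_ne_zero.2 hx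
  refine ((Real.hasDerivAt_cosh x).div (Real.hasDerivAt_sinh x) hsinh).congr_deriv ?_
  unfold coth
  field_simp

lemma hasDerivAt_coth_mul {g x : ℝ} (hgx : g * x ≠ 0) :
    HasDerivAt (fun y => coth (g * y)) (g * (1 - coth (g * x) ^ 2)) x := by
  exact ((hasDerivAt_coth hgx).comp x ((hasDerivAt_id x).const_mul g)).congr_deriv (by ring)

section ArtanhDiv

variable {S : Set ℝ} {f f' f'' : ℝ → ℝ} {a x : ℝ}

lemma hasDerivAt_artanh_div (ha : 0 ≤ a) (hf : HasDerivAt f (f' x) x) (haf : a < f x) :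
    HasDerivAt (fun y => artanh (a / f y)) (-a * f' x / (f x ^ 2 - a ^ 2)) x := by
  have hf₀ : f x ≠ 0 := by linarith
  have hmem : a / f x ∈ Ioo (-1) 1 :=
    ⟨by linarith [div_nonneg ha (ha.trans haf.le)], (div_lt_one (by linarith)).2 haf⟩
  refine ((hasDerivAt_artanh hmem).comp x ((hasDerivAt_const x a).div hf hf₀)).congr_deriv ?_
  have : f x ^ 2 - a ^ 2 ≠ 0 := by nlinarith
  field_simp
  ring

theorem concaveOn_artanh_div (hS : Convex ℝ S) (hSo : IsOpen S) (ha : 0 ≤ a)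
    (hf : ∀ x ∈ S, HasDerivAt f (f' x) x) (hf' : ∀ x ∈ S, HasDerivAt f' (f'' x) x)
    (haf : ∀ x ∈ S, a < f x)
    (hconc : ∀ x ∈ S, 2 * f x * f' x ^ 2 ≤ f'' x * (f x ^ 2 - a ^ 2)) :
    ConcaveOn ℝ S (fun x => artanh (a / f x)) := by
  have hgap : ∀ x ∈ S, f x ^ 2 - a ^ 2 ≠ 0 := fun x hx => by nlinarith [haf x hx]
  refine concaveOn_of_hasDerivWithinAt2_nonpos (f' := fun x => -a * f' x / (f x ^ 2 - a ^ 2))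
    (f'' := fun x => a * (2 * f x * f' x ^ 2 - f'' x * (f x ^ 2 - a ^ 2)) / (f x ^ 2 - a ^ 2) ^ 2)
    hS
    (fun x hx => (hasDerivAt_artanh_div ha (hf x hx) (haf x hx)).continuousAt.continuousWithinAt)
    ?_ ?_ ?_ <;> rw [hSo.interior_eq] <;> intro x hx
  · exact (hasDerivAt_artanh_div ha (hf x hx) (haf x hx)).hasDerivWithinAt
  · refine ((((hf' x hx).const_mul (-a)).div (((hf x hx).fun_pow 2).sub_const (a ^ 2))
      (hgap x hx)).congr_deriv ?_).hasDerivWithinAt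
    field_simp
    ring
  · exact div_nonpos_of_nonpos_of_nonneg
      (mul_nonpos_of_nonneg_of_nonpos ha (sub_nonpos.2 (hconc x hx))) (sq_nonneg _)

end ArtanhDiv

theorem ConcaveOn.antitoneOn_div_of_nonneg {f : ℝ → ℝ} (hf : ConcaveOn ℝ (Ioi 0) f)
    (hf₀ : ∀ x ∈ Ioi (0 : ℝ), 0 ≤ f x) : AntitoneOn (fun x => f x / x) (Ioi 0) := by
  intro s (hs : 0 < s) t (ht : 0 < t) hst
  -- `s` is a convex combination of `u ∈ (0, s)` and `t`; drop the term `f u ≥ 0`, let `u → 0⁺`.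
  suffices h : s / t * f t ≤ f s by
    rw [div_mul_eq_mul_div, div_le_iff₀ ht] at h
    change f t / t ≤ f s / s
    rw [div_le_div_iff₀ ht hs]
    linarith
  have hcont : ContinuousAt (fun u => (s - u) / (t - u) * f t) 0 :=
    ((continuousAt_const.sub continuousAt_id).div (continuousAt_const.sub continuousAt_id)
      (by simpa using ht.ne')).mul continuousAt_const
  have hlim : Tendsto (fun u => (s - u) / (t - u) * f t) (𝓝[>] 0) (𝓝 (s / t * f t)) := by
    simpa using hcont.tendsto.mono_left nhdsWithin_le_nhds
  refine le_of_tendsto hlim ?_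
  filter_upwards [Ioo_mem_nhdsGT hs] with u ⟨hu₀, hus⟩
  have htu : 0 < t - u := by linarith
  have hwu : 0 ≤ (t - s) / (t - u) := div_nonneg (by linarith) htu.le
  have hwt : 0 ≤ (s - u) / (t - u) := div_nonneg (by linarith) htu.le
  have hconv := hf.2 hu₀ ht hwu hwt (by rw [← add_div, div_eq_one_iff_eq htu.ne']; ring)
  have hs_eq : (t - s) / (t - u) * u + (s - u) / (t - u) * t = s := by
    field_simp
    ring
  simp only [smul_eq_mul, hs_eq] at hconv
  nlinarith [mul_nonneg hwu (hf₀ u hu₀)]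

lemma cothSum_deriv_sq_le {a c₁ c₂ g₁ g₂ x₁ x₂ : ℝ} (ha : a ^ 2 ≤ (c₁ + c₂) ^ 2)
    (hc₁ : 0 ≤ c₁) (hc₂ : 0 ≤ c₂) (hx₁ : 1 ≤ x₁) (hx₂ : 1 ≤ x₂) :
    (x₁ * c₁ + x₂ * c₂) * (g₁ * (x₁ ^ 2 - 1) * c₁ + g₂ * (x₂ ^ 2 - 1) * c₂) ^ 2 ≤
      (g₁ ^ 2 * x₁ * (x₁ ^ 2 - 1) * c₁ + g₂ ^ 2 * x₂ * (x₂ ^ 2 - 1) * c₂) *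
        ((x₁ * c₁ + x₂ * c₂) ^ 2 - a ^ 2) := by
  have hy₁ : 0 ≤ x₁ ^ 2 - 1 := by nlinarith
  have hy₂ : 0 ≤ x₂ ^ 2 - 1 := by nlinarith
  have hgap := sub_nonneg.2 ha
  have hD : 0 ≤ x₁ * c₁ + x₂ * c₂ := by positivity
  have hF : 0 ≤ g₁ ^ 2 * x₁ * (x₁ ^ 2 - 1) * c₁ + g₂ ^ 2 * x₂ * (x₂ ^ 2 - 1) * c₂ := by
    positivity
  -- Two Cauchy–Schwarz inequalities, as the identity
  -- `x₁ x₂ (RHS - LHS) = D c₁ c₂ (x₁² - 1) (x₂² - 1) (g₁ x₁ - g₂ x₂)²`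
  -- `                    + F (c₁ c₂ (x₁ - x₂)² + x₁ x₂ ((c₁ + c₂)² - a²))`
  -- where `D` and `F` are the two first factors.
  nlinarith [mul_nonneg hD
      (by positivity : 0 ≤ c₁ * c₂ * (x₁ ^ 2 - 1) * (x₂ ^ 2 - 1) * (g₁ * x₁ - g₂ * x₂) ^ 2),
    mul_nonneg hF
      (by positivity : 0 ≤ c₁ * c₂ * (x₁ - x₂) ^ 2 + x₁ * x₂ * ((c₁ + c₂) ^ 2 - a ^ 2)),
    mul_pos (by linarith : (0 : ℝ) < x₁) (by linarith : (0 : ℝ) < x₂)]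

noncomputable def cothSum (c₁ c₂ g₁ g₂ s : ℝ) : ℝ := coth (g₁ * s) * c₁ + coth (g₂ * s) * c₂

lemma add_lt_cothSum {c₁ c₂ g₁ g₂ s : ℝ} (hc₁ : 0 < c₁) (hc₂ : 0 < c₂) (hg₁ : 0 < g₁)
    (hg₂ : 0 < g₂) (hs : 0 < s) : c₁ + c₂ < cothSum c₁ c₂ g₁ g₂ s := by
  have h₁ := one_lt_coth (mul_pos hg₁ hs)
  have h₂ := one_lt_coth (mul_pos hg₂ hs)
  rw [cothSum]
  nlinarith

theorem concaveOn_artanh_div_cothSum {a c₁ c₂ g₁ g₂ : ℝ} (ha : 0 ≤ a) (hac : a ≤ c₁ + c₂)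
    (hc₁ : 0 < c₁) (hc₂ : 0 < c₂) (hg₁ : 0 < g₁) (hg₂ : 0 < g₂) :
    ConcaveOn ℝ (Ioi 0) (fun s => artanh (a / cothSum c₁ c₂ g₁ g₂ s)) := by
  have hcoth' {g x : ℝ} (hg : 0 < g) (hx : 0 < x) :=
    hasDerivAt_coth_mul (g := g) (x := x) (mul_pos hg hx).ne'
  have hcoth'' {g x : ℝ} (hg : 0 < g) (hx : 0 < x) :
      HasDerivAt (fun y => g * (1 - coth (g * y) ^ 2))
        (-2 * g ^ 2 * coth (g * x) * (1 - coth (g * x) ^ 2)) x :=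
    (((hcoth' hg hx).fun_pow 2).const_sub 1 |>.const_mul g).congr_deriv (by ring)
  refine concaveOn_artanh_div (convex_Ioi 0) isOpen_Ioi ha
    (fun x hx => ((hcoth' hg₁ hx).mul_const c₁).add ((hcoth' hg₂ hx).mul_const c₂))
    (fun x hx => ((hcoth'' hg₁ hx).mul_const c₁).add ((hcoth'' hg₂ hx).mul_const c₂))
    (fun x hx => ?_) (fun x hx => ?_)
  · exact hac.trans_lt (add_lt_cothSum hc₁ hc₂ hg₁ hg₂ hx)
  · have hineq := cothSum_deriv_sq_le (g₁ := g₁) (g₂ := g₂) (pow_le_pow_left₀ ha hac 2)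
      hc₁.le hc₂.le (one_lt_coth (mul_pos hg₁ hx)).le (one_lt_coth (mul_pos hg₂ hx)).le
    simp only [cothSum]
    linear_combination 2 * hineq

theorem mul_artanh_div_cothSum_one_le {a c₁ c₂ g₁ g₂ s : ℝ} (ha : 0 ≤ a) (hac : a ≤ c₁ + c₂)
    (hc₁ : 0 < c₁) (hc₂ : 0 < c₂) (hg₁ : 0 < g₁) (hg₂ : 0 < g₂) (hs₀ : 0 < s) (hs₁ : s ≤ 1) :
    s * artanh (a / cothSum c₁ c₂ g₁ g₂ 1) ≤ artanh (a / cothSum c₁ c₂ g₁ g₂ s) := by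
  have hnonneg : ∀ x ∈ Ioi (0 : ℝ), 0 ≤ artanh (a / cothSum c₁ c₂ g₁ g₂ x) := fun x hx => by
    have hlt := hac.trans_lt (add_lt_cothSum hc₁ hc₂ hg₁ hg₂ hx)
    exact artanh_nonneg (div_nonneg ha (ha.trans hlt.le))
      (div_le_one_of_le₀ hlt.le (ha.trans hlt.le))
  have hslope := (concaveOn_artanh_div_cothSum ha hac hc₁ hc₂ hg₁ hg₂).antitoneOn_div_of_nonneg
    hnonneg (mem_Ioi.2 hs₀) (mem_Ioi.2 one_pos) hs₁
  simp only [div_one] at hslope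
  rwa [le_div_iff₀ hs₀, mul_comm] at hslope

theorem stmt_13 (θ₁ lam θ₂ γ₁ γ₂ : ℝ) (h₀ : 0 ≤ θ₁) (h₁ : θ₁ < lam)
    (h₂ : lam < θ₂) (h₃ : θ₂ < Real.pi) (hγ₁ : 0 < γ₁) (hγ₂ : 0 < γ₂)
    (ρ r : ℝ → ℝ)
    (hρ : ∀ s > (0 : ℝ), ρ s ∈ Set.Ioo (0 : ℝ) 1 ∧
      artanh (ρ s) = (1 / 2) * artanh (Real.sin (θ₂ - θ₁) /
        (coth (2 * γ₁ * s) * Real.sin (θ₂ - lam) +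
         coth (2 * γ₂ * s) * Real.sin (lam - θ₁))))
    (hr : ∀ s > (0 : ℝ), r s ∈ Set.Ioo (0 : ℝ) 1 ∧
      artanh (r s) = s * artanh (ρ 1)) :
    ∀ s ∈ Set.Ioc (0 : ℝ) 1, r s ≤ ρ s := by
  rintro s ⟨hs₀, hs₁⟩
  have hA : 0 ≤ Real.sin (θ₂ - θ₁) :=
    Real.sin_nonneg_of_nonneg_of_le_pi (by linarith) (by linarith)
  have hc₁ : 0 < Real.sin (θ₂ - lam) := Real.sin_pos_of_pos_of_lt_pi (by linarith) (by linarith)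
  have hc₂ : 0 < Real.sin (lam - θ₁) := Real.sin_pos_of_pos_of_lt_pi (by linarith) (by linarith)
  have hAc : Real.sin (θ₂ - θ₁) ≤ Real.sin (θ₂ - lam) + Real.sin (lam - θ₁) := by
    rw [show θ₂ - θ₁ = (θ₂ - lam) + (lam - θ₁) by ring, Real.sin_add]
    nlinarith [Real.cos_le_one (θ₂ - lam), Real.cos_le_one (lam - θ₁)]
  have hkey := mul_artanh_div_cothSum_one_le hA hAc hc₁ hc₂ (by positivity : 0 < 2 * γ₁)
    (by positivity : 0 < 2 * γ₂) hs₀ hs₁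
  obtain ⟨hρs, hρs_eq⟩ := hρ s hs₀
  obtain ⟨-, hρ₁_eq⟩ := hρ 1 one_pos
  obtain ⟨hrs, hrs_eq⟩ := hr s hs₀
  rw [← artanh_le_artanh_iff (Ioo_subset_Ioo_left (by norm_num) hrs)
    (Ioo_subset_Ioo_left (by norm_num) hρs), hrs_eq, hρs_eq, hρ₁_eq]
  unfold cothSum at hkey
  linarith
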